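/- arXiv:1006.1076 — 6 statements merged into one kernel-verified Lean document; each statement's English description precedes it below -/
import Mathlib

section
/- For any 4×4 matrix M over a commutative ring, the minors satisfy the identity Δ_{34,13}·Δ_{13,12} = Δ_{34,12}·Δ_{13,13} + Δ_{134,123}·Δ_{3,1}, where Δ_{r,b} denotes the determinant of the submatrix of M with rows indexed by the set r and columns indexed by the set b. -/
open Matrix

/-- For a 4×4 matrix `M` over a commutative ring,
`Δ_{34,13}·Δ_{13,12} = Δ_{34,12}·Δ_{13,13} + Δ_{134,123}·Δ_{3,1}`. -/
theorem stmt_0 {R : Type*} [CommRing R] (M : Matrix (Fin 4) (Fin 4) R) :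
    (M.submatrix ![2, 3] ![0, 2]).det * (M.submatrix ![0, 2] ![0, 1]).det =
      (M.submatrix ![2, 3] ![0, 1]).det * (M.submatrix ![0, 2] ![0, 2]).det +
        (M.submatrix ![0, 2, 3] ![0, 1, 2]).det * M 2 0 := by
  simp only [det_fin_two, det_fin_three, submatrix_apply, cons_val]
  ring
end

section
/- For any 4×4 matrix M over a commutative ring, the minors satisfy the identity Δ_{14,12}·Δ_{34,13} = Δ_{14,13}·Δ_{34,12} + Δ_{134,123}·Δ_{4,1}, where Δ_{r,b} denotes the determinant of the submatrix of M with rows indexed by r and columns indexed by b. -/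
open Matrix

/-- For a 4×4 matrix `M` over a commutative ring,
`Δ_{14,12}·Δ_{34,13} = Δ_{14,13}·Δ_{34,12} + Δ_{134,123}·Δ_{4,1}`. -/
theorem stmt_2 {R : Type*} [CommRing R] (M : Matrix (Fin 4) (Fin 4) R) :
    (M.submatrix ![0, 3] ![0, 1]).det * (M.submatrix ![2, 3] ![0, 2]).det =
      (M.submatrix ![0, 3] ![0, 2]).det * (M.submatrix ![2, 3] ![0, 1]).det +
        (M.submatrix ![0, 2, 3] ![0, 1, 2]).det * M 3 0 := by
  simp only [det_fin_two, det_fin_three, submatrix_apply, cons_val_zero, cons_val_one,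
    cons_val_fin_one, cons_val]
  ring
end

section
/- Let M be a 4×4 matrix over a linearly ordered field. If the chamber minors Δ_{1,1}, Δ_{3,1}, Δ_{4,1}, Δ_{13,12}, Δ_{34,12} are all positive, then the minor Δ_{14,12} is positive. -/
open Matrix

/-- A three-term Plücker relation: the expansion along its first column of the `3 × 3` minor on
rows `a, b, c` and columns `j, j, k`, which vanishes. -/
theorem Matrix.det_submatrix_fin_two_mul_eq_add {m n R : Type*} [CommRing R]
    (M : Matrix m n R) (a b c : m) (j k : n) :
    (M.submatrix ![a, c] ![j, k]).det * M b j
      = (M.submatrix ![b, c] ![j, k]).det * M a j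
        + (M.submatrix ![a, b] ![j, k]).det * M c j := by
  simp only [det_fin_two, submatrix_apply, Matrix.cons_val_zero, Matrix.cons_val_one]
  ring

theorem Matrix.det_submatrix_fin_two_pos_of_pos {m n R : Type*} [CommRing R] [LinearOrder R]
    [IsStrictOrderedRing R] (M : Matrix m n R) (a b c : m) (j k : n)
    (ha : 0 < M a j) (hb : 0 < M b j) (hc : 0 < M c j)
    (hab : 0 < (M.submatrix ![a, b] ![j, k]).det) (hbc : 0 < (M.submatrix ![b, c] ![j, k]).det) :
    0 < (M.submatrix ![a, c] ![j, k]).det := by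
  have hprod : 0 < (M.submatrix ![a, c] ![j, k]).det * M b j := by
    rw [M.det_submatrix_fin_two_mul_eq_add a b c j k]
    positivity
  exact pos_of_mul_pos_left hprod hb.le

/-- For a 4×4 matrix over a linearly ordered field, positivity of the chamber
minors `Δ_{1,1}, Δ_{3,1}, Δ_{4,1}, Δ_{13,12}, Δ_{34,12}` implies `Δ_{14,12} > 0`. -/
theorem stmt_4 {K : Type*} [Field K] [LinearOrder K] [IsStrictOrderedRing K] (M : Matrix (Fin 4) (Fin 4) K)
    (h11 : 0 < M 0 0) (h31 : 0 < M 2 0) (h41 : 0 < M 3 0)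
    (h1312 : 0 < (M.submatrix ![0, 2] ![0, 1]).det)
    (h3412 : 0 < (M.submatrix ![2, 3] ![0, 1]).det) :
    0 < (M.submatrix ![0, 3] ![0, 1]).det :=
  M.det_submatrix_fin_two_pos_of_pos 0 2 3 0 1 h11 h31 h41 h1312 h3412
end

section
/- Let M be a 4×4 matrix over a linearly ordered field. If the minors Δ_{3,1}, Δ_{13,12}, Δ_{13,13}, Δ_{34,12}, Δ_{134,123} are all positive, then the minor Δ_{34,13} is positive. -/
open Matrix

/-! Restricted to rows 1, 3, 4 and columns 1, 2, 3 of `M`, the exchange identity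
`Δ_{34,13} Δ_{13,12} = Δ_{34,12} Δ_{13,13} + Δ_{134,123} Δ_{3,1}` is an identity between minors of a
3×3 matrix; with every term but `Δ_{34,13}` positive, it forces `Δ_{34,13} > 0`. -/

theorem det_submatrix_exchange_fin_three {R : Type*} [CommRing R]
    (A : Matrix (Fin 3) (Fin 3) R) :
    (A.submatrix ![1, 2] ![0, 2]).det * (A.submatrix ![0, 1] ![0, 1]).det =
      (A.submatrix ![1, 2] ![0, 1]).det * (A.submatrix ![0, 1] ![0, 2]).det + A.det * A 1 0 := by
  simp only [det_fin_two, det_fin_three, submatrix_apply, cons_val_zero, cons_val_one]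
  ring

theorem pos_of_mul_eq_mul_add_mul {K : Type*} [Semiring K] [LinearOrder K] [IsStrictOrderedRing K]
    {a b c d e f : K} (h : a * b = c * d + e * f) (hb : 0 < b) (hc : 0 < c) (hd : 0 < d)
    (he : 0 < e) (hf : 0 < f) : 0 < a :=
  pos_of_mul_pos_left (h ▸ by positivity) hb.le

/-- For a 4×4 matrix over a linearly ordered field, positivity of the minors
`Δ_{3,1}, Δ_{13,12}, Δ_{13,13}, Δ_{34,12}, Δ_{134,123}` implies `Δ_{34,13} > 0`. -/
theorem stmt_5 {K : Type*} [Field K] [LinearOrder K] [IsStrictOrderedRing K] (M : Matrix (Fin 4) (Fin 4) K)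
    (h31 : 0 < M 2 0)
    (h1312 : 0 < (M.submatrix ![0, 2] ![0, 1]).det)
    (h1313 : 0 < (M.submatrix ![0, 2] ![0, 2]).det)
    (h3412 : 0 < (M.submatrix ![2, 3] ![0, 1]).det)
    (h134123 : 0 < (M.submatrix ![0, 2, 3] ![0, 1, 2]).det) :
    0 < (M.submatrix ![2, 3] ![0, 2]).det := by
  have exchange := det_submatrix_exchange_fin_three (M.submatrix ![0, 2, 3] ![0, 1, 2])
  simp only [submatrix_submatrix] at exchange
  -- the side goals are equalities of index vectors, such as `![0, 2, 3] ∘ ![1, 2] = ![2, 3]`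
  convert pos_of_mul_eq_mul_add_mul exchange h1312 h3412 h1313 h134123 h31 using 3 <;> decide
end

section
/- For any 4×4 matrix M over a commutative ring, the three-term exchange identity Δ_{134,123}·Δ_{3,1}·Δ_{1,1} + Δ_{34,12}·Δ_{13,13}·Δ_{1,1} + Δ_{13,13}·Δ_{4,1}·Δ_{13,12} = Δ_{14,13}·Δ_{13,12}·Δ_{3,1} holds, where Δ_{r,b} denotes the minor of M with rows r and columns b. -/
/-!
The identity is the composite of two three-term exchange relations among minors: multiply
`Δ_{14,13} Δ_{3,1} = Δ_{1,1} Δ_{34,13} + Δ_{4,1} Δ_{13,13}` by `Δ_{13,12}` and substitute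
`Δ_{34,13} Δ_{13,12} = Δ_{34,12} Δ_{13,13} + Δ_{134,123} Δ_{3,1}`.
-/

namespace Matrix

variable {m n R : Type*} [CommRing R] (M : Matrix m n R)

/-- Laplace expansion, along its first column, of the vanishing minor of `M` with rows `i, j, k`
and columns `a, a, b`. -/
theorem det_submatrix_fin_two_mul_apply (i j k : m) (a b : n) :
    (M.submatrix ![i, k] ![a, b]).det * M j a =
      M i a * (M.submatrix ![j, k] ![a, b]).det + M k a * (M.submatrix ![i, j] ![a, b]).det := by
  simp only [det_fin_two, submatrix_apply, cons_val_zero, cons_val_one, cons_val_fin_one]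
  ring

theorem det_submatrix_fin_two_exchange (i j k : m) (a b c : n) :
    (M.submatrix ![j, k] ![a, c]).det * (M.submatrix ![i, j] ![a, b]).det =
      (M.submatrix ![j, k] ![a, b]).det * (M.submatrix ![i, j] ![a, c]).det +
        (M.submatrix ![i, j, k] ![a, b, c]).det * M j a := by
  simp only [det_fin_two, det_fin_three, submatrix_apply, cons_val_zero, cons_val_one,
    cons_val_fin_one, cons_val]
  ring

end Matrix

/-- Three-term exchange identity for a 4×4 matrix over a commutative ring:
`Δ_{134,123}·Δ_{3,1}·Δ_{1,1} + Δ_{34,12}·Δ_{13,13}·Δ_{1,1} + Δ_{13,13}·Δ_{4,1}·Δ_{13,12}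
  = Δ_{14,13}·Δ_{13,12}·Δ_{3,1}`. -/
theorem stmt_16 {R : Type*} [CommRing R] (M : Matrix (Fin 4) (Fin 4) R) :
    (M.submatrix ![0, 2, 3] ![0, 1, 2]).det * M 2 0 * M 0 0 +
        (M.submatrix ![2, 3] ![0, 1]).det * (M.submatrix ![0, 2] ![0, 2]).det * M 0 0 +
        (M.submatrix ![0, 2] ![0, 2]).det * M 3 0 * (M.submatrix ![0, 2] ![0, 1]).det =
      (M.submatrix ![0, 3] ![0, 2]).det * (M.submatrix ![0, 2] ![0, 1]).det * M 2 0 := by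
  linear_combination
    -(M.submatrix ![0, 2] ![0, 1]).det * M.det_submatrix_fin_two_mul_apply 0 2 3 0 2 -
      M 0 0 * M.det_submatrix_fin_two_exchange 0 2 3 0 1 2
end

section
/- Let M be a 4×4 matrix over a linearly ordered field with Δ_{3,1} > 0, Δ_{13,12} > 0. If Δ_{1,1}, Δ_{4,1}, Δ_{13,13}, Δ_{34,12}, Δ_{134,123} are all positive, then Δ_{14,13} > 0. -/
open Matrix

theorem det_submatrix_identity_fin_four {R : Type*} [CommRing R] (M : Matrix (Fin 4) (Fin 4) R) :
    (M.submatrix ![0, 3] ![0, 2]).det * (M.submatrix ![0, 2] ![0, 1]).det * M 2 0 =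
      (M.submatrix ![0, 2, 3] ![0, 1, 2]).det * M 2 0 * M 0 0 +
        (M.submatrix ![2, 3] ![0, 1]).det * (M.submatrix ![0, 2] ![0, 2]).det * M 0 0 +
        (M.submatrix ![0, 2] ![0, 2]).det * M 3 0 * (M.submatrix ![0, 2] ![0, 1]).det := by
  simp only [det_fin_two, det_fin_three, submatrix_apply, cons_val_zero, cons_val_one,
    cons_val_two, head_cons, tail_cons]
  ring

/-- For a 4×4 matrix over a linearly ordered field, if
`Δ_{3,1}, Δ_{13,12}, Δ_{1,1}, Δ_{4,1}, Δ_{13,13}, Δ_{34,12}, Δ_{134,123}` are positive,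
then `Δ_{14,13} > 0`. -/
theorem stmt_17 {K : Type*} [Field K] [LinearOrder K] [IsStrictOrderedRing K] (M : Matrix (Fin 4) (Fin 4) K)
    (h31 : 0 < M 2 0) (h1312 : 0 < (M.submatrix ![0, 2] ![0, 1]).det)
    (h11 : 0 < M 0 0) (h41 : 0 < M 3 0)
    (h1313 : 0 < (M.submatrix ![0, 2] ![0, 2]).det)
    (h3412 : 0 < (M.submatrix ![2, 3] ![0, 1]).det)
    (h134123 : 0 < (M.submatrix ![0, 2, 3] ![0, 1, 2]).det) :
    0 < (M.submatrix ![0, 3] ![0, 2]).det := by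
  have hprod : 0 < (M.submatrix ![0, 3] ![0, 2]).det * (M.submatrix ![0, 2] ![0, 1]).det * M 2 0 := by
    rw [det_submatrix_identity_fin_four]
    positivity
  exact pos_of_mul_pos_left (pos_of_mul_pos_left hprod h31.le) h1312.le
end
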